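/- Trace equivalence, cost equivalence, and termination equivalence are congruences on the operational model of Imp²: each of these three two-sorted equivalence relations on (𝖱, 𝖶) is compatible with all constructors of Imp² (sequential composition p;q and while e p of readers, the writer constructors [p]_s, s.c, ret_s, and c;q). -/

import Mathlib

/-! # Statement 10: trace, cost, and termination equivalence are congruences on the operational model of Imp² -/
namespace ImpLang

/-- Arithmetic expressions over the variable set `ℕ`. -/
inductive Ex : Type
  | const : ℤ → Ex
  | var : ℕ → Ex
  | add : Ex → Ex → Ex
  | sub : Ex → Ex → Ex
  | mul : Ex → Ex → Ex

/-- Variable stores. -/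
abbrev Store := ℕ → ℤ

/-- Expression evaluation. -/
def eev : Ex → Store → ℤ
  | .const n, _ => n
  | .var x, s => s x
  | .add e₁ e₂, s => eev e₁ s + eev e₂ s
  | .sub e₁ e₂, s => eev e₁ s - eev e₂ s
  | .mul e₁ e₂, s => eev e₁ s * eev e₂ s

/-- Store update `s[x := n]`. -/
def upd (s : Store) (x : ℕ) (n : ℤ) : Store := fun y => if y = x then n else s y

/-- Imp program terms. -/
inductive P : Type
  | skip : P
  | assign : ℕ → Ex → P
  | whileE : Ex → P → P
  | seq : P → P → P

/-- The deterministic small-step operational semantics of Imp: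
`step p s = .inl (p', s')` means `p,s → p',s'`, and `step p s = .inr s'` means
`p,s ↓ s'`. -/
def step : P → Store → (P × Store) ⊕ Store
  | .skip, s => .inr s
  | .assign x e, s => .inr (upd s x (eev e s))
  | .whileE e p, s =>
      if eev e s = 0 then .inr s else .inl (.seq p (.whileE e p), s)
  | .seq p q, s =>
      match step p s with
      | .inl (p', s') => .inl (.seq p' q, s')
      | .inr s' => .inl (q, s')

/-- Iterated execution of the small-step semantics: `runF c n` is the configuration
reached after `n` steps from `c` (a running configuration `.inl (p,s)` or a
terminated one `.inr s'`), and `none` if the execution stopped strictly before. -/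
def runF : (P × Store) ⊕ Store → ℕ → Option ((P × Store) ⊕ Store)
  | c, 0 => some c
  | c, n+1 =>
      match runF c n with
      | some (.inl (p, s)) => some (step p s)
      | _ => none

/-- The trace map of Imp, encoding the (nonempty, finite or infinite) sequence
`trc(p)(s) ∈ 𝒮^∞` as a function `ℕ → Option (Store ⊕ Store)`: the `n`-th entry is
`some (.inl sₙ)` for an intermediate store produced by a transition `→`,
`some (.inr s')` for the final store produced by `↓`, and `none` beyond the end of a
finite trace. Thus a finite trace `(s₁,…,sₙ,s')` is the function sending
`0,…,n-1` to `some (.inl sᵢ₊₁)`, `n` to `some (.inr s')` and everything else to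
`none`, and an infinite trace `(s₁,s₂,…)` is the function sending each `n` to
`some (.inl sₙ₊₁)`. -/
def trc (p : P) (s : Store) : ℕ → Option (Store ⊕ Store) := fun n =>
  match runF (.inl (p, s)) (n+1) with
  | some (.inl (_, s')) => some (.inl s')
  | some (.inr s') => some (.inr s')
  | none => none

open Classical in
/-- The cost map of Imp: `cst p s = some (n, s')` iff `trc p s = (s₁,…,sₙ,s')` is
finite, and `cst p s = none` (the element `*`) iff `trc p s` is infinite. -/
noncomputable def cst (p : P) (s : Store) : Option (ℕ × Store) :=
  if h : ∃ ns : ℕ × Store, trc p s ns.1 = some (.inr ns.2) then some h.choose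
  else none

/-- The termination map of Imp: `ter p s = some s'` iff `trc p s` is finite with
last element `s'`, and `ter p s = none` (the element `*`) iff `trc p s` is
infinite. -/
noncomputable def ter (p : P) (s : Store) : Option Store := (cst p s).map Prod.snd

end ImpLang
namespace RW

/-- A deterministic reader–writer transition system over a state set `S`:
`rstep p s = c` means `p,s → c`; `wstep c = .inl (d,s)` means `c →ˢ d`;
`wstep c = .inr (.inl d)` means `c → d`; `wstep c = .inr (.inr s)` means `c ↓ s`. -/
structure DRW (S : Type) where
  Rd : Type
  Wr : Type
  rstep : Rd → S → Wr
  wstep : Wr → (Wr × S) ⊕ (Wr ⊕ S)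

variable {S : Type}

/-- The output transition `c →ˢ d`. -/
def OutTr (M : DRW S) (c : M.Wr) (s : S) (d : M.Wr) : Prop := M.wstep c = .inl (d, s)

/-- The silent transition `c → d`. -/
def TauTr (M : DRW S) (c d : M.Wr) : Prop := M.wstep c = .inr (.inl d)

/-- The termination transition `c ↓ s`. -/
def DownTr (M : DRW S) (c : M.Wr) (s : S) : Prop := M.wstep c = .inr (.inr s)

/-- The weak silent transition `c ⇒ d`: a finite chain of silent steps. -/
def WSil (M : DRW S) : M.Wr → M.Wr → Prop := Relation.ReflTransGen (TauTr M)

/-- The weak output transition `c ⇒ˢ d`: `c ⇒ c' →ˢ d` for some `c'`. -/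
def WOut (M : DRW S) (c : M.Wr) (s : S) (d : M.Wr) : Prop :=
  ∃ c', WSil M c c' ∧ OutTr M c' s d

/-- The weak termination transition `c ⇓ s`: `c ⇒ c' ↓ s` for some `c'`. -/
def WDone (M : DRW S) (c : M.Wr) (s : S) : Prop :=
  ∃ c', WSil M c c' ∧ DownTr M c' s

/-- `ReachL M c l d`: from `c` there is a chain of weak output transitions
producing the list `l` of states and ending in `d`. -/
def ReachL (M : DRW S) : M.Wr → List S → M.Wr → Prop
  | c, [], d => c = d
  | c, s :: l, d => ∃ c', WOut M c s c' ∧ ReachL M c' l d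

/-- `TrcEntry M c n v` holds iff the `n`-th entry (0-indexed) of the trace
`trc^w(c)` is `v`, where `v = .inl s` tags an intermediate output state and
`v = .inr s` tags the final state of a finite trace. -/
def TrcEntry (M : DRW S) (c : M.Wr) (n : ℕ) (v : S ⊕ S) : Prop :=
  (∃ l d s d', ReachL M c l d ∧ l.length = n ∧ WOut M d s d' ∧ v = .inl s) ∨
  (∃ l d s, ReachL M c l d ∧ l.length = n ∧ WDone M d s ∧ v = .inr s)

open Classical in
/-- The writer trace map `trc^w : X_w → 𝒮^∞`, with a (nonempty, finite or infinite)
trace encoded as a function `ℕ → Option (S ⊕ S)`: a finite trace `(s₁,…,sₙ,s)`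
sends `0,…,n-1` to `some (.inl sᵢ₊₁)`, `n` to `some (.inr s)` and all larger
numbers to `none`; an infinite trace `(s₁,s₂,…)` sends each `n` to
`some (.inl sₙ₊₁)`. -/
noncomputable def trcW (M : DRW S) (c : M.Wr) : ℕ → Option (S ⊕ S) := fun n =>
  if h : ∃ v, TrcEntry M c n v then some h.choose else none

/-- The reader trace map `trc^r : X_r → (𝒮^∞)^𝒮`: `trc^r(p)(s) = trc^w(c)` where
`p,s → c`. -/
noncomputable def trcR (M : DRW S) (p : M.Rd) (s : S) : ℕ → Option (S ⊕ S) :=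
  trcW M (M.rstep p s)

open Classical in
/-- The writer cost map: `cstW M c = some (n,s)` iff `trc^w(c) = (s₁,…,sₙ,s)` is
finite, and `none` (i.e. `*`) iff `trc^w(c)` is infinite. -/
noncomputable def cstW (M : DRW S) (c : M.Wr) : Option (ℕ × S) :=
  if h : ∃ ns : ℕ × S, trcW M c ns.1 = some (.inr ns.2) then some h.choose else none

/-- The reader cost map. -/
noncomputable def cstR (M : DRW S) (p : M.Rd) (s : S) : Option (ℕ × S) :=
  cstW M (M.rstep p s)

/-- The writer termination map: the last element of a finite trace, `none` (`*`)
for an infinite trace. -/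
noncomputable def terW (M : DRW S) (c : M.Wr) : Option S := (cstW M c).map Prod.snd

/-- The reader termination map. -/
noncomputable def terR (M : DRW S) (p : M.Rd) (s : S) : Option S :=
  (cstR M p s).map Prod.snd

end RW
namespace ImpLang

/-- Writers of the two-sorted language Imp². Readers are exactly the Imp terms `P`. -/
inductive W : Type
  /-- The writer `[p]_s`. -/
  | run : P → Store → W
  /-- The writer `s.c`. -/
  | out : Store → W → W
  /-- The writer `ret_s`. -/
  | ret : Store → W
  /-- The writer `c ; q`. -/
  | seqW : W → P → W

/-- The reader semantics of Imp²: `rstep2 p s` is the unique writer `c` with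
`p,s → c`. -/
def rstep2 : P → Store → W
  | .seq p q, s => .seqW (.run p s) q
  | .skip, s => .ret s
  | .assign x e, s => .ret (upd s x (eev e s))
  | .whileE e p, s =>
      if eev e s = 0 then .ret s
      else .out s (.run (.seq p (.whileE e p)) s)

/-- The writer semantics of Imp²: `wstep2 c = .inl (d,s)` means `c →ˢ d`,
`wstep2 c = .inr (.inl d)` means `c → d`, and `wstep2 c = .inr (.inr s)` means
`c ↓ s`. -/
def wstep2 : W → (W × Store) ⊕ (W ⊕ Store)
  | .run p s => .inr (.inl (rstep2 p s))
  | .ret s => .inr (.inr s)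
  | .out s c => .inl (c, s)
  | .seqW c q =>
      match wstep2 c with
      | .inl (d, s) => .inl (.seqW d q, s)
      | .inr (.inl d) => .inr (.inl (.seqW d q))
      | .inr (.inr s') => .inl (.run q s', s')

/-- The operational model of Imp² as a deterministic reader–writer transition
system. -/
def Imp2 : RW.DRW Store where
  Rd := P
  Wr := W
  rstep := rstep2
  wstep := wstep2

end ImpLang

namespace ImpLang

open RW

/-- A two-sorted relation on `(𝖱, 𝖶)` is a congruence if it is compatible with all
constructors of Imp²: sequential composition and while loops of readers, and the
writer constructors `[p]_s`, `s.c`, `ret_s` and `c ; q`. -/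
def IsCongr (Er : P → P → Prop) (Ew : W → W → Prop) : Prop :=
  (∀ p p' q q', Er p p' → Er q q' → Er (.seq p q) (.seq p' q')) ∧
  (∀ (e : Ex) p p', Er p p' → Er (.whileE e p) (.whileE e p')) ∧
  (∀ (s : Store) p p', Er p p' → Ew (.run p s) (.run p' s)) ∧
  (∀ (s : Store) c c', Ew c c' → Ew (.out s c) (.out s c')) ∧
  (∀ s : Store, Ew (.ret s) (.ret s)) ∧
  (∀ c c' q q', Ew c c' → Er q q' → Ew (.seqW c q) (.seqW c' q'))

end ImpLang

/-!
Every writer of Imp² reaches an output or a termination after finitely many silent steps, so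
its trace unfolds as `ret s` or `s :: trc d`. Hence traces are computed compositionally:
the trace of `c ; q` is that of `c` with its final store `s'` turned into an output and
followed by `trc^r(q)(s')`, and the trace of `while e p` solves a guarded fixed-point
equation in the trace of `p`. Trace, cost and termination equivalence compare the whole
trace, the position and value of its final store, and the final store alone; each of these
comparisons is preserved by the trace operations, for loops by induction on the position
in the trace.
-/

namespace RW

abbrev Trace (S : Type) := ℕ → Option (S ⊕ S)

namespace Trace

variable {S : Type}

def ret (s : S) : Trace S
  | 0 => some (.inr s)
  | _ + 1 => none

def cons (s : S) (t : Trace S) : Trace S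
  | 0 => some (.inl s)
  | n + 1 => t n

/-- The final store of `t` becomes an ordinary output, and `k` continues from it. -/
def seq (t : Trace S) (k : S → Trace S) : Trace S
  | 0 =>
    match t 0 with
    | some (.inl s) | some (.inr s) => some (.inl s)
    | none => none
  | n + 1 =>
    match t 0 with
    | some (.inl _) => seq (fun m => t (m + 1)) k n
    | some (.inr s) => k s n
    | none => none

/-- `t` begins with a finite trace `(s₁,…,sₙ,s)`; later entries are ignored, so no
well-formedness of `t` is needed. -/
def EndsAt : Trace S → ℕ → S → Prop
  | t, 0, s => t 0 = some (.inr s)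
  | t, n + 1, s => (∃ s', t 0 = some (.inl s')) ∧ EndsAt (fun m => t (m + 1)) n s

def Returns (t : Trace S) (s : S) : Prop := ∃ n, EndsAt t n s

/-- `F s` is the trace of a loop started in `s`: it returns at once if `exit s`, and otherwise
outputs `s`, runs a body with trace `T s` and repeats. -/
def IsLoop (exit : S → Prop) (T F : S → Trace S) : Prop :=
  ∀ s, (exit s → F s = ret s) ∧ (¬ exit s → F s = cons s (seq (T s) F))

theorem seq_cons (s : S) (t : Trace S) (k : S → Trace S) :
    seq (cons s t) k = cons s (seq t k) := by
  funext n; cases n <;> rfl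

theorem seq_ret (s : S) (k : S → Trace S) : seq (ret s) k = cons s (k s) := by
  funext n; cases n <;> rfl

theorem EndsAt.apply_eq {t : Trace S} {n : ℕ} {s : S} (h : EndsAt t n s) :
    t n = some (.inr s) := by
  induction n generalizing t with
  | zero => exact h
  | succ n ih => exact ih h.2

theorem EndsAt.unique {t : Trace S} {n m : ℕ} {s u : S} (h : EndsAt t n s)
    (h' : EndsAt t m u) : n = m ∧ s = u := by
  induction n generalizing t m with
  | zero =>
    replace h : t 0 = some (.inr s) := h
    cases m with
    | zero => simpa [EndsAt, h] using h'
    | succ m => obtain ⟨⟨_, h'⟩, -⟩ := h'; simp [h] at h'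
  | succ n ih =>
    cases m with
    | zero =>
      obtain ⟨⟨_, h⟩, -⟩ := h
      replace h' : t 0 = some (.inr u) := h'
      simp [h] at h'
    | succ m => simpa using ih h.2 h'.2

theorem endsAt_ret {s u : S} {n : ℕ} : EndsAt (ret s) n u ↔ n = 0 ∧ u = s := by
  cases n <;> simp [EndsAt, ret, eq_comm]

theorem not_endsAt_cons_zero {s u : S} {t : Trace S} : ¬ EndsAt (cons s t) 0 u := by
  simp [EndsAt, cons]

theorem endsAt_cons_succ {s u : S} {t : Trace S} {n : ℕ} :
    EndsAt (cons s t) (n + 1) u ↔ EndsAt t n u :=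
  and_iff_right ⟨s, rfl⟩

theorem eq_cons_of_head_eq_inl {t : Trace S} {s : S} (h : t 0 = some (.inl s)) :
    t = cons s (fun n => t (n + 1)) := by
  funext n; cases n
  · exact h
  · rfl

theorem seq_of_head_eq_inr {t : Trace S} {s : S} (h : t 0 = some (.inr s)) (k : S → Trace S) :
    seq t k = cons s (k s) := by
  funext n; cases n <;> simp [seq, cons, h]

theorem endsAt_iff_of_head_eq_inr {t : Trace S} {s u : S} {n : ℕ} (h : t 0 = some (.inr s)) :
    EndsAt t n u ↔ n = 0 ∧ u = s := by
  cases n <;> simp [EndsAt, h, eq_comm]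

theorem not_endsAt_of_head_eq_none {t : Trace S} {n : ℕ} {u : S} (h : t 0 = none) :
    ¬ EndsAt t n u := by
  cases n <;> simp [EndsAt, h]

theorem endsAt_seq {t : Trace S} {k : S → Trace S} {n : ℕ} {u : S} :
    EndsAt (seq t k) n u ↔ ∃ m v l, EndsAt t m v ∧ EndsAt (k v) l u ∧ n = m + 1 + l := by
  induction n generalizing t with
  | zero =>
    refine ⟨fun h => ?_, fun ⟨_, _, _, _, _, h⟩ => by omega⟩
    have h := h.apply_eq
    simp only [seq] at h
    split at h <;> simp at h
  | succ n ih =>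
    rcases ht : t 0 with _ | s | s
    · refine ⟨fun h => ?_, fun ⟨_, _, _, h, _⟩ => absurd h (not_endsAt_of_head_eq_none ht)⟩
      obtain ⟨⟨_, h⟩, -⟩ := h
      simp [seq, ht] at h
    · rw [eq_cons_of_head_eq_inl ht, seq_cons, endsAt_cons_succ, ih]
      constructor
      · rintro ⟨m, v, l, hm, hl, rfl⟩
        exact ⟨m + 1, v, l, endsAt_cons_succ.mpr hm, hl, by omega⟩
      · rintro ⟨_ | m, v, l, hm, hl, hn⟩
        · exact absurd hm not_endsAt_cons_zero
        · exact ⟨m, v, l, endsAt_cons_succ.mp hm, hl, by omega⟩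
    · simp only [seq_of_head_eq_inr ht, endsAt_cons_succ, endsAt_iff_of_head_eq_inr ht]
      constructor
      · exact fun h => ⟨0, s, n, ⟨rfl, rfl⟩, h, by omega⟩
      · rintro ⟨_, _, l, ⟨rfl, rfl⟩, hl, hn⟩
        obtain rfl : n = l := by omega
        exact hl

theorem seq_apply_congr {t : Trace S} {k k' : S → Trace S} {n : ℕ}
    (h : ∀ s m, m < n → k s m = k' s m) : seq t k n = seq t k' n := by
  induction n generalizing t with
  | zero => rfl
  | succ n ih =>
    rcases ht : t 0 with _ | s | s
    · simp [seq, ht]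
    · rw [eq_cons_of_head_eq_inl ht, seq_cons, seq_cons]
      exact ih fun s m hm => h s m (by omega)
    · rw [seq_of_head_eq_inr ht, seq_of_head_eq_inr ht]
      exact h s n (by omega)

theorem returns_cons {s : S} {t : Trace S} : Returns (cons s t) = Returns t := by
  funext u
  refine propext ⟨fun ⟨n, h⟩ => ?_, fun ⟨n, h⟩ => ⟨n + 1, endsAt_cons_succ.mpr h⟩⟩
  cases n with
  | zero => exact absurd h not_endsAt_cons_zero
  | succ n => exact ⟨n, endsAt_cons_succ.mp h⟩

theorem returns_seq {t : Trace S} {k : S → Trace S} {u : S} :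
    Returns (seq t k) u ↔ ∃ v, Returns t v ∧ Returns (k v) u := by
  simp only [Returns, endsAt_seq]
  constructor
  · rintro ⟨_, m, v, l, hm, hl, -⟩
    exact ⟨v, ⟨m, hm⟩, ⟨l, hl⟩⟩
  · rintro ⟨v, ⟨m, hm⟩, ⟨l, hl⟩⟩
    exact ⟨_, m, v, l, hm, hl, rfl⟩

section Loop

variable {exit : S → Prop} {T T' F F' : S → Trace S}

theorem IsLoop.eq_apply (hT : ∀ s, T s = T' s) (hF : IsLoop exit T F) (hF' : IsLoop exit T' F')
    (s : S) (n : ℕ) : F s n = F' s n := by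
  induction n using Nat.strong_induction_on generalizing s with
  | _ n ih =>
    by_cases hs : exit s
    · rw [(hF s).1 hs, (hF' s).1 hs]
    · rw [(hF s).2 hs, (hF' s).2 hs, hT s]
      cases n with
      | zero => rfl
      | succ n => exact seq_apply_congr fun v m hm => ih m (by omega) v

theorem IsLoop.endsAt_le (hT : ∀ s, EndsAt (T s) ≤ EndsAt (T' s)) (hF : IsLoop exit T F)
    (hF' : IsLoop exit T' F') (s : S) : EndsAt (F s) ≤ EndsAt (F' s) := by
  intro n u hn
  induction n using Nat.strong_induction_on generalizing s with
  | _ n ih =>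
    by_cases hs : exit s
    · rw [(hF s).1 hs] at hn
      rwa [(hF' s).1 hs]
    · rw [(hF s).2 hs] at hn
      rw [(hF' s).2 hs]
      cases n with
      | zero => exact absurd hn not_endsAt_cons_zero
      | succ n =>
        obtain ⟨m, v, l, hm, hl, rfl⟩ := endsAt_seq.mp (endsAt_cons_succ.mp hn)
        exact endsAt_cons_succ.mpr
          (endsAt_seq.mpr ⟨m, v, l, hT s m v hm, ih l (by omega) v hl, rfl⟩)

theorem IsLoop.returns_le (hT : ∀ s, Returns (T s) ≤ Returns (T' s)) (hF : IsLoop exit T F)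
    (hF' : IsLoop exit T' F') (s : S) : Returns (F s) ≤ Returns (F' s) := by
  rintro u ⟨n, hn⟩
  induction n using Nat.strong_induction_on generalizing s with
  | _ n ih =>
    by_cases hs : exit s
    · rw [(hF s).1 hs] at hn
      rw [(hF' s).1 hs]
      exact ⟨n, hn⟩
    · rw [(hF s).2 hs] at hn
      rw [(hF' s).2 hs, returns_cons, returns_seq]
      cases n with
      | zero => exact absurd hn not_endsAt_cons_zero
      | succ n =>
        obtain ⟨m, v, l, hm, hl, rfl⟩ := endsAt_seq.mp (endsAt_cons_succ.mp hn)
        exact ⟨v, hT s v ⟨m, hm⟩, ih l (by omega) v hl⟩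

end Loop

structure Compatible (E : Trace S → Trace S → Prop) : Prop where
  refl : ∀ t, E t t
  cons : ∀ s {t t'}, E t t' → E (cons s t) (cons s t')
  seq : ∀ {t t' k k'}, E t t' → (∀ s, E (k s) (k' s)) → E (seq t k) (seq t' k')
  loop : ∀ {exit : S → Prop} {T T' F F' : S → Trace S}, (∀ s, E (T s) (T' s)) →
    IsLoop exit T F → IsLoop exit T' F' → ∀ s, E (F s) (F' s)

theorem compatible_eq : Compatible (@Eq (Trace S)) where
  refl _ := rfl
  cons _ _ _ h := h ▸ rfl
  seq ht hk := by rw [ht, funext hk]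
  loop hT hF hF' s := funext (hF.eq_apply hT hF' s)

theorem compatible_endsAt : Compatible fun t t' : Trace S => EndsAt t = EndsAt t' where
  refl _ := rfl
  cons s t t' h := by
    funext n u
    cases n with
    | zero => simp only [not_endsAt_cons_zero]
    | succ n => rw [endsAt_cons_succ, endsAt_cons_succ, h]
  seq ht hk := by
    funext n u
    simp only [endsAt_seq, ht, hk]
  loop hT hF hF' s := le_antisymm (hF.endsAt_le (fun s => (hT s).le) hF' s)
    (hF'.endsAt_le (fun s => (hT s).ge) hF s)

theorem compatible_returns : Compatible fun t t' : Trace S => Returns t = Returns t' where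
  refl _ := rfl
  cons s t t' h := by rw [returns_cons, returns_cons, h]
  seq ht hk := by
    funext u
    simp only [returns_seq, ht, hk]
  loop hT hF hF' s := le_antisymm (hF.returns_le (fun s => (hT s).le) hF' s)
    (hF'.returns_le (fun s => (hT s).ge) hF s)

end Trace

variable {S : Type} {M : DRW S}

theorem not_tauTr_of_outTr {c d : M.Wr} {s : S} (h : OutTr M c s d) (y : M.Wr) :
    ¬ TauTr M c y := by
  simp [TauTr, show M.wstep c = _ from h]

theorem not_tauTr_of_downTr {c : M.Wr} {s : S} (h : DownTr M c s) (y : M.Wr) :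
    ¬ TauTr M c y := by
  simp [TauTr, show M.wstep c = _ from h]

theorem exists_wSil_iff_of_forall_not_tauTr {Q : M.Wr → Prop} {c : M.Wr}
    (hc : ∀ y, ¬ TauTr M c y) : (∃ x, WSil M c x ∧ Q x) ↔ Q c := by
  refine ⟨fun ⟨x, hx, hQ⟩ => ?_, fun h => ⟨c, .refl, h⟩⟩
  rcases Relation.ReflTransGen.cases_head hx with rfl | ⟨y, hy, -⟩
  · exact hQ
  · exact absurd hy (hc y)

theorem exists_wSil_iff_of_tauTr {Q : M.Wr → Prop} {c d : M.Wr} (h : TauTr M c d)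
    (hQ : ∀ x, Q x → ∀ y, ¬ TauTr M x y) :
    (∃ x, WSil M c x ∧ Q x) ↔ ∃ x, WSil M d x ∧ Q x := by
  refine ⟨fun ⟨x, hx, hx'⟩ => ?_, fun ⟨x, hx, hx'⟩ => ⟨x, .head h hx, hx'⟩⟩
  rcases Relation.ReflTransGen.cases_head hx with rfl | ⟨y, hy, hyx⟩
  · exact absurd h (hQ c hx' d)
  · have hyd : y = d := by
      simpa [TauTr, show M.wstep c = _ from h, eq_comm] using hy
    exact ⟨x, hyd ▸ hyx, hx'⟩

theorem wOut_iff_of_tauTr {c d e : M.Wr} {s : S} (h : TauTr M c d) :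
    WOut M c s e ↔ WOut M d s e :=
  exists_wSil_iff_of_tauTr h fun _ hx => not_tauTr_of_outTr hx

theorem wDone_iff_of_tauTr {c d : M.Wr} {s : S} (h : TauTr M c d) :
    WDone M c s ↔ WDone M d s :=
  exists_wSil_iff_of_tauTr h fun _ hx => not_tauTr_of_downTr hx

theorem wOut_iff_of_outTr {c d e : M.Wr} {s s' : S} (h : OutTr M c s d) :
    WOut M c s' e ↔ s' = s ∧ e = d := by
  rw [WOut, exists_wSil_iff_of_forall_not_tauTr (not_tauTr_of_outTr h), OutTr,
    show M.wstep c = _ from h]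
  simp [and_comm, eq_comm]

theorem not_wDone_of_outTr {c d : M.Wr} {s s' : S} (h : OutTr M c s d) :
    ¬ WDone M c s' := by
  rw [WDone, exists_wSil_iff_of_forall_not_tauTr (not_tauTr_of_outTr h), DownTr,
    show M.wstep c = _ from h]
  simp

theorem not_wOut_of_downTr {c e : M.Wr} {s s' : S} (h : DownTr M c s) :
    ¬ WOut M c s' e := by
  rw [WOut, exists_wSil_iff_of_forall_not_tauTr (not_tauTr_of_downTr h), OutTr,
    show M.wstep c = _ from h]
  simp

theorem wDone_iff_of_downTr {c : M.Wr} {s s' : S} (h : DownTr M c s) :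
    WDone M c s' ↔ s' = s := by
  rw [WDone, exists_wSil_iff_of_forall_not_tauTr (not_tauTr_of_downTr h), DownTr,
    show M.wstep c = _ from h]
  simp [eq_comm]

def Productive (M : DRW S) (c : M.Wr) : Prop := (∃ s d, WOut M c s d) ∨ ∃ s, WDone M c s

theorem Productive.of_tauTr {c d : M.Wr} (h : TauTr M c d) (hd : Productive M d) :
    Productive M c := by
  rcases hd with ⟨s, e, x, hx, he⟩ | ⟨s, x, hx, hs⟩
  · exact .inl ⟨s, e, x, .head h hx, he⟩
  · exact .inr ⟨s, x, .head h hx, hs⟩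

theorem trcEntry_zero_iff {c : M.Wr} {v : S ⊕ S} :
    TrcEntry M c 0 v ↔ (∃ s d, WOut M c s d ∧ v = .inl s) ∨ ∃ s, WDone M c s ∧ v = .inr s := by
  simp [TrcEntry, ReachL]

theorem trcEntry_succ_iff {c : M.Wr} {n : ℕ} {v : S ⊕ S} :
    TrcEntry M c (n + 1) v ↔ ∃ s d, WOut M c s d ∧ TrcEntry M d n v := by
  constructor
  · rintro (⟨_ | ⟨s, l⟩, d, s', d', h, hl, ho, rfl⟩ | ⟨_ | ⟨s, l⟩, d, s', h, hl, ho, rfl⟩)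
    · simp at hl
    · obtain ⟨e, he, h⟩ := h
      exact ⟨s, e, he, .inl ⟨l, d, s', d', h, by simpa using hl, ho, rfl⟩⟩
    · simp at hl
    · obtain ⟨e, he, h⟩ := h
      exact ⟨s, e, he, .inr ⟨l, d, s', h, by simpa using hl, ho, rfl⟩⟩
  · rintro ⟨s, e, he, ⟨l, d, s', d', h, rfl, ho, rfl⟩ | ⟨l, d, s', h, rfl, ho, rfl⟩⟩
    · exact .inl ⟨s :: l, d, s', d', ⟨e, he, h⟩, rfl, ho, rfl⟩
    · exact .inr ⟨s :: l, d, s', ⟨e, he, h⟩, rfl, ho, rfl⟩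

theorem trcW_apply_congr {c d : M.Wr} {n m : ℕ} (h : ∀ v, TrcEntry M c n v ↔ TrcEntry M d m v) :
    trcW M c n = trcW M d m := by
  have h : TrcEntry M c n = TrcEntry M d m := funext fun v => propext (h v)
  unfold trcW
  rw [h]

theorem trcW_apply_eq_some {c : M.Wr} {n : ℕ} {v₀ : S ⊕ S} (h : ∀ v, TrcEntry M c n v ↔ v = v₀) :
    trcW M c n = some v₀ := by
  have hex : ∃ v, TrcEntry M c n v := ⟨v₀, (h v₀).mpr rfl⟩
  simp only [trcW, dif_pos hex, (h _).mp hex.choose_spec]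

theorem trcW_apply_eq_none {c : M.Wr} {n : ℕ} (h : ∀ v, ¬ TrcEntry M c n v) :
    trcW M c n = none := by
  simp only [trcW, dif_neg (not_exists.mpr h)]

theorem trcW_eq_of_tauTr {c d : M.Wr} (h : TauTr M c d) : trcW M c = trcW M d := by
  funext n
  refine trcW_apply_congr fun v => ?_
  cases n <;>
    simp only [trcEntry_zero_iff, trcEntry_succ_iff, wOut_iff_of_tauTr h, wDone_iff_of_tauTr h]

theorem trcW_eq_of_wSil {c d : M.Wr} (h : WSil M c d) : trcW M c = trcW M d := by
  induction h with
  | refl => rfl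
  | tail _ h ih => exact ih.trans (trcW_eq_of_tauTr h)

theorem trcW_of_outTr {c d : M.Wr} {s : S} (h : OutTr M c s d) :
    trcW M c = Trace.cons s (trcW M d) := by
  funext n
  cases n with
  | zero =>
    refine trcW_apply_eq_some fun v => ?_
    simp [trcEntry_zero_iff, wOut_iff_of_outTr h, not_wDone_of_outTr h]
  | succ n =>
    refine trcW_apply_congr fun v => ?_
    simp [trcEntry_succ_iff, wOut_iff_of_outTr h]

theorem trcW_of_downTr {c : M.Wr} {s : S} (h : DownTr M c s) : trcW M c = Trace.ret s := by
  funext n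
  cases n with
  | zero =>
    refine trcW_apply_eq_some fun v => ?_
    simp [trcEntry_zero_iff, not_wOut_of_downTr h, wDone_iff_of_downTr h]
  | succ n =>
    refine trcW_apply_eq_none fun v => ?_
    simp [trcEntry_succ_iff, not_wOut_of_downTr h]

theorem trcW_of_wOut {c d : M.Wr} {s : S} (h : WOut M c s d) :
    trcW M c = Trace.cons s (trcW M d) := by
  obtain ⟨c', hc, h⟩ := h
  rw [trcW_eq_of_wSil hc, trcW_of_outTr h]

theorem trcW_of_wDone {c : M.Wr} {s : S} (h : WDone M c s) : trcW M c = Trace.ret s := by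
  obtain ⟨c', hc, h⟩ := h
  rw [trcW_eq_of_wSil hc, trcW_of_downTr h]

theorem endsAt_trcW_of_trcEntry {c : M.Wr} {n : ℕ} {s : S} (h : TrcEntry M c n (.inr s)) :
    Trace.EndsAt (trcW M c) n s := by
  induction n generalizing c with
  | zero =>
    obtain ⟨_, _, _, hv⟩ | ⟨s', h, hv⟩ := trcEntry_zero_iff.mp h
    · simp at hv
    · rw [trcW_of_wDone h, Sum.inr_injective hv]
      exact Trace.endsAt_ret.mpr ⟨rfl, rfl⟩
  | succ n ih =>
    obtain ⟨s', d, hd, h⟩ := trcEntry_succ_iff.mp h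
    rw [trcW_of_wOut hd]
    exact Trace.endsAt_cons_succ.mpr (ih h)

theorem trcW_apply_eq_some_inr_iff {c : M.Wr} {n : ℕ} {s : S} :
    trcW M c n = some (.inr s) ↔ Trace.EndsAt (trcW M c) n s := by
  refine ⟨fun h => ?_, Trace.EndsAt.apply_eq⟩
  unfold trcW at h
  split_ifs at h with hex
  exact endsAt_trcW_of_trcEntry (Option.some_injective _ h ▸ hex.choose_spec)

theorem cstW_eq_some_iff {c : M.Wr} {n : ℕ} {s : S} :
    cstW M c = some (n, s) ↔ Trace.EndsAt (trcW M c) n s := by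
  unfold cstW
  split_ifs with hex
  · have hc := trcW_apply_eq_some_inr_iff.mp hex.choose_spec
    refine ⟨fun h => by rwa [Option.some_injective _ h] at hc, fun h => ?_⟩
    obtain ⟨h₁, h₂⟩ := hc.unique h
    exact congrArg some (Prod.ext h₁ h₂)
  · exact iff_of_false (by simp) fun h => hex ⟨(n, s), trcW_apply_eq_some_inr_iff.mpr h⟩

theorem terW_eq_some_iff {c : M.Wr} {s : S} :
    terW M c = some s ↔ Trace.Returns (trcW M c) s := by
  simp [terW, cstW_eq_some_iff, Trace.Returns]

theorem cstW_eq_cstW_iff {c c' : M.Wr} :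
    cstW M c = cstW M c' ↔ Trace.EndsAt (trcW M c) = Trace.EndsAt (trcW M c') := by
  rw [Option.ext_iff]
  simp only [Prod.forall, cstW_eq_some_iff, funext_iff, eq_iff_iff]

theorem terW_eq_terW_iff {c c' : M.Wr} :
    terW M c = terW M c' ↔ Trace.Returns (trcW M c) = Trace.Returns (trcW M c') := by
  rw [Option.ext_iff]
  simp only [terW_eq_some_iff, funext_iff, eq_iff_iff]

theorem cstR_eq_cstR_iff {p p' : M.Rd} :
    cstR M p = cstR M p' ↔ ∀ s, Trace.EndsAt (trcR M p s) = Trace.EndsAt (trcR M p' s) :=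
  funext_iff.trans (forall_congr' fun _ => cstW_eq_cstW_iff)

theorem terR_eq_terR_iff {p p' : M.Rd} :
    terR M p = terR M p' ↔ ∀ s, Trace.Returns (trcR M p s) = Trace.Returns (trcR M p' s) :=
  funext_iff.trans (forall_congr' fun _ => terW_eq_terW_iff)

end RW

namespace ImpLang

open RW

theorem tauTr_run (p : P) (s : Store) : TauTr Imp2 (.run p s) (rstep2 p s) := rfl

theorem tauTr_seqW {c d : W} (q : P) (h : TauTr Imp2 c d) :
    TauTr Imp2 (.seqW c q) (.seqW d q) := by
  show wstep2 (.seqW c q) = _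
  simp only [wstep2, show wstep2 c = _ from h]
  rfl

theorem outTr_seqW {c d : W} {s : Store} (q : P) (h : OutTr Imp2 c s d) :
    OutTr Imp2 (.seqW c q) s (.seqW d q) := by
  show wstep2 (.seqW c q) = _
  simp only [wstep2, show wstep2 c = _ from h]
  rfl

theorem outTr_seqW_of_downTr {c : W} {s : Store} (q : P) (h : DownTr Imp2 c s) :
    OutTr Imp2 (.seqW c q) s (.run q s) := by
  show wstep2 (.seqW c q) = _
  simp only [wstep2, show wstep2 c = _ from h]
  rfl

theorem wSil_seqW {c d : W} (q : P) (h : WSil Imp2 c d) : WSil Imp2 (.seqW c q) (.seqW d q) := by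
  induction h with
  | refl => exact .refl
  | tail _ h ih => exact ih.tail (tauTr_seqW q h)

theorem wOut_seqW {c d : W} {s : Store} (q : P) (h : WOut Imp2 c s d) :
    WOut Imp2 (.seqW c q) s (.seqW d q) :=
  let ⟨_, hc, h⟩ := h
  ⟨_, wSil_seqW q hc, outTr_seqW q h⟩

theorem wOut_seqW_of_wDone {c : W} {s : Store} (q : P) (h : WDone Imp2 c s) :
    WOut Imp2 (.seqW c q) s (.run q s) :=
  let ⟨_, hc, h⟩ := h
  ⟨_, wSil_seqW q hc, outTr_seqW_of_downTr q h⟩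

theorem productive_ret (s : Store) : Productive Imp2 (.ret s) := .inr ⟨s, _, .refl, rfl⟩

theorem productive_out (s : Store) (c : W) : Productive Imp2 (.out s c) :=
  .inl ⟨s, c, _, .refl, rfl⟩

theorem productive_seqW {c : W} (q : P) (h : Productive Imp2 c) : Productive Imp2 (.seqW c q) := by
  rcases h with ⟨s, d, h⟩ | ⟨s, h⟩
  · exact .inl ⟨s, _, wOut_seqW q h⟩
  · exact .inl ⟨s, _, wOut_seqW_of_wDone q h⟩

theorem productive_run (p : P) (s : Store) : Productive Imp2 (.run p s) := by
  refine Productive.of_tauTr (tauTr_run p s) ?_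
  induction p generalizing s with
  | skip | assign => exact productive_ret _
  | whileE e p =>
    simp only [rstep2]
    split_ifs
    exacts [productive_ret s, productive_out s _]
  | seq p q ih => exact productive_seqW q ((ih s).of_tauTr (tauTr_run p s))

theorem productive (c : W) : Productive Imp2 c := by
  induction c with
  | run p s => exact productive_run p s
  | out s c => exact productive_out s c
  | ret s => exact productive_ret s
  | seqW c q ih => exact productive_seqW q ih

theorem trcW_run (p : P) (s : Store) : trcW Imp2 (.run p s) = trcR Imp2 p s :=
  trcW_eq_of_tauTr (tauTr_run p s)

theorem trcW_ret (s : Store) : trcW Imp2 (.ret s) = Trace.ret s := trcW_of_downTr rfl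

theorem trcW_out (s : Store) (c : W) : trcW Imp2 (.out s c) = Trace.cons s (trcW Imp2 c) :=
  trcW_of_outTr rfl

theorem trcW_seqW (c : W) (q : P) :
    trcW Imp2 (.seqW c q) = Trace.seq (trcW Imp2 c) (trcR Imp2 q) := by
  funext n
  induction n generalizing c with
  | zero =>
    rcases productive c with ⟨s, d, h⟩ | ⟨s, h⟩
    · rw [trcW_of_wOut (wOut_seqW q h), trcW_of_wOut h]; rfl
    · rw [trcW_of_wOut (wOut_seqW_of_wDone q h), trcW_of_wDone h]; rfl
  | succ n ih =>
    rcases productive c with ⟨s, d, h⟩ | ⟨s, h⟩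
    · rw [trcW_of_wOut (wOut_seqW q h), trcW_of_wOut h, Trace.seq_cons]
      exact ih d
    · rw [trcW_of_wOut (wOut_seqW_of_wDone q h), trcW_of_wDone h, Trace.seq_ret, trcW_run]

theorem trcR_seq (p q : P) (s : Store) :
    trcR Imp2 (.seq p q) s = Trace.seq (trcR Imp2 p s) (trcR Imp2 q) := by
  rw [← trcW_run p s]
  exact trcW_seqW (.run p s) q

theorem isLoop_trcR_whileE (e : Ex) (p : P) :
    Trace.IsLoop (fun s => eev e s = 0) (trcR Imp2 p) (trcR Imp2 (.whileE e p)) := by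
  refine fun s => ⟨fun h => ?_, fun h => ?_⟩ <;> show trcW Imp2 (rstep2 (.whileE e p) s) = _
  · simp only [rstep2, if_pos h, trcW_ret]
  · simp only [rstep2, if_neg h, trcW_out, trcW_run, trcR_seq]

theorem isCongr_of_compatible {E : Trace Store → Trace Store → Prop} (hE : Trace.Compatible E)
    {Er : P → P → Prop} {Ew : W → W → Prop}
    (hEr : ∀ p p', Er p p' ↔ ∀ s, E (trcR Imp2 p s) (trcR Imp2 p' s))
    (hEw : ∀ c c', Ew c c' ↔ E (trcW Imp2 c) (trcW Imp2 c')) : IsCongr Er Ew := by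
  refine ⟨fun p p' q q' hp hq => (hEr _ _).mpr fun s => ?_,
    fun e p p' hp => (hEr _ _).mpr
      (hE.loop ((hEr _ _).mp hp) (isLoop_trcR_whileE e p) (isLoop_trcR_whileE e p')),
    fun s p p' hp => (hEw _ _).mpr ?_, fun s c c' hc => (hEw _ _).mpr ?_,
    fun s => (hEw _ _).mpr (hE.refl _), fun c c' q q' hc hq => (hEw _ _).mpr ?_⟩
  · rw [trcR_seq, trcR_seq]
    exact hE.seq ((hEr _ _).mp hp s) ((hEr _ _).mp hq)
  · rw [trcW_run, trcW_run]
    exact (hEr _ _).mp hp s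
  · rw [trcW_out, trcW_out]
    exact hE.cons s ((hEw _ _).mp hc)
  · rw [trcW_seqW, trcW_seqW]
    exact hE.seq ((hEw _ _).mp hc) ((hEr _ _).mp hq)

/-- trace equivalence, cost equivalence and termination
equivalence are congruences on the operational model of Imp². -/
theorem imp2_congruence :
    IsCongr (fun p p' => trcR Imp2 p = trcR Imp2 p')
      (fun c c' => trcW Imp2 c = trcW Imp2 c') ∧
    IsCongr (fun p p' => cstR Imp2 p = cstR Imp2 p')
      (fun c c' => cstW Imp2 c = cstW Imp2 c') ∧
    IsCongr (fun p p' => terR Imp2 p = terR Imp2 p')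
      (fun c c' => terW Imp2 c = terW Imp2 c') :=
  ⟨isCongr_of_compatible Trace.compatible_eq (fun _ _ => funext_iff) (fun _ _ => Iff.rfl),
    isCongr_of_compatible Trace.compatible_endsAt (fun _ _ => cstR_eq_cstR_iff)
      (fun _ _ => cstW_eq_cstW_iff),
    isCongr_of_compatible Trace.compatible_returns (fun _ _ => terR_eq_terR_iff)
      (fun _ _ => terW_eq_terW_iff)⟩

end ImpLang
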